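/- arXiv:1505.01312 — 2 statements merged into one kernel-verified Lean document; each statement's English description precedes it below -/
import Mathlib

section
/- Let A be a complex unital Banach algebra, let e, f ∈ A be invertible positive elements, and let a ∈ A be such that a^†_{e,f} exists. Then the following are equivalent: (i) a is weighted EP with weights e and f; (ii) there exist u, v, u₁, v₁ ∈ A such that a^†_{e,f} a = u a^†_{e,f} = a v and a a^†_{e,f} = a^†_{e,f} u₁ = v₁ a; (iii) there exist u₂, v₂, u₃, v₃ ∈ A such that a^†_{e,f} a = u₂ a^†_{e,f}, a a^†_{e,f} = a^†_{e,f} u₃ and a^†_{e,f} = a v₂ = v₃ a. -/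
/-!
Common definitions: hermitian and positive elements of a complex unital Banach
algebra, hermitian elements with respect to the equivalent norm induced by an
invertible positive element (weight), and the weighted Moore–Penrose inverse,
both for Banach algebra elements and for bounded linear operators between
Banach spaces.
-/

noncomputable section

/-- An element `a` of a complex unital Banach algebra is hermitian if
`‖exp(i t a)‖ = 1` for all real `t`. -/
def IsHermitianEl {A : Type*} [NormedRing A] [NormedAlgebra ℂ A] (a : A) : Prop :=
  ∀ t : ℝ, ‖NormedSpace.exp ((Complex.I * (t : ℂ)) • a)‖ = 1

/-- An element of a complex unital Banach algebra is positive if it is hermitian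
and its spectrum is contained in `[0, ∞)`. -/
def IsPositiveEl {A : Type*} [NormedRing A] [NormedAlgebra ℂ A] (a : A) : Prop :=
  IsHermitianEl a ∧ spectrum ℂ a ⊆ Complex.ofReal '' Set.Ici (0 : ℝ)

/-- `a` is hermitian in `A^u`, i.e. hermitian for the equivalent norm
`‖x‖_u = ‖u^{1/2} x u^{-1/2}‖`, where `u^{1/2}` is the (unique) invertible
positive square root of the invertible positive weight `u`. -/
def IsHermitianWt {A : Type*} [NormedRing A] [NormedAlgebra ℂ A] (u a : A) : Prop :=
  ∃ s : Aˣ, IsPositiveEl (s : A) ∧ ((s : A)) ^ 2 = u ∧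
    ∀ t : ℝ, ‖(s : A) * NormedSpace.exp ((Complex.I * (t : ℂ)) • a) * ((s⁻¹ : Aˣ) : A)‖ = 1

/-- `b` is the weighted Moore–Penrose inverse of `a` with weights `e` and `f`. -/
def IsWMPI {A : Type*} [NormedRing A] [NormedAlgebra ℂ A] (e f a b : A) : Prop :=
  a * b * a = a ∧ b * a * b = b ∧ IsHermitianWt e (a * b) ∧ IsHermitianWt f (b * a)

/-- `a` is weighted EP with weights `e` and `f`. -/
def IsWEP {A : Type*} [NormedRing A] [NormedAlgebra ℂ A] (e f a : A) : Prop :=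
  ∃ b : A, IsWMPI e f a b ∧ a * b = b * a

/-- `S ∈ L(Y,X)` is the weighted Moore–Penrose inverse of `T ∈ L(X,Y)` with
weights `E ∈ L(Y)` and `F ∈ L(X)`. -/
def IsWMPIop {X Y : Type*} [NormedAddCommGroup X] [NormedSpace ℂ X]
    [NormedAddCommGroup Y] [NormedSpace ℂ Y]
    (E : Y →L[ℂ] Y) (F : X →L[ℂ] X) (T : X →L[ℂ] Y) (S : Y →L[ℂ] X) : Prop :=
  (T.comp S).comp T = T ∧ (S.comp T).comp S = S ∧
    IsHermitianWt E (T.comp S) ∧ IsHermitianWt F (S.comp T)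

/-- `T ∈ L(X)` is weighted EP with weights `E` and `F`. -/
def IsWEPop {X : Type*} [NormedAddCommGroup X] [NormedSpace ℂ X]
    (E F T : X →L[ℂ] X) : Prop :=
  ∃ S : X →L[ℂ] X, IsWMPIop E F T S ∧ T.comp S = S.comp T

/-!
Everything reduces to the uniqueness of the weighted Moore–Penrose inverse: then `a` is weighted
EP iff it commutes with `a^†`, and either family of factorizations forces
`a a^† = (a a^†)(a^† a) = a^† a`.

For uniqueness, `exp (iπ p) = 1 - 2p` for an idempotent `p`, so a hermitian idempotent gives a
reflection of weighted norm one. Two such idempotents with the same range (or kernel) satisfy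
`(1 - 2p)(1 - 2q) = 1 + c` with `c² = 0`, and the powers `1 + n c` stay bounded only if `c = 0`.
This needs both idempotents to be measured in the same norm, i.e. the positive square root of a
weight to be unique: if `s² = t²`, then `X = s - t` solves `sX + Xt = 0`, hence `X = cⁿ X dⁿ` for
the Cayley transforms `c`, `d` of `s`, `t`, whose spectra lie in the open unit disc, so `X = 0` by
Gelfand's formula.
-/

open scoped Nat
open Filter Topology

theorem Complex.norm_sub_one_lt_norm_add_one {z : ℂ} (hz : 0 < z.re) : ‖z - 1‖ < ‖z + 1‖ := by
  rw [← sq_lt_sq₀ (norm_nonneg _) (norm_nonneg _), Complex.sq_norm, Complex.sq_norm,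
    Complex.normSq_apply, Complex.normSq_apply]
  simp only [Complex.sub_re, Complex.add_re, Complex.one_re, Complex.sub_im, Complex.add_im,
    Complex.one_im, sub_zero, add_zero]
  nlinarith

section

variable {A : Type*} [NormedRing A] [NormedAlgebra ℂ A]

theorem IsPositiveEl.re_pos_of_mem_spectrum {s : A} (hs : IsPositiveEl s) (hu : IsUnit s)
    {z : ℂ} (hz : z ∈ spectrum ℂ s) : 0 < z.re := by
  obtain ⟨r, hr, rfl⟩ := hs.2 hz
  have hr0 : (r : ℂ) ≠ 0 := fun h => spectrum.zero_notMem ℂ hu (h ▸ hz)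
  exact lt_of_le_of_ne hr (Ne.symm (mod_cast hr0))

theorem isUnit_add_one_of_forall_re_pos {s : A} (hs : ∀ z ∈ spectrum ℂ s, 0 < z.re) :
    IsUnit (s + 1) := by
  have h : (-1 : ℂ) ∉ spectrum ℂ s := fun hmem => by
    have := hs _ hmem
    norm_num at this
  rw [spectrum.notMem_iff, map_neg, map_one, ← neg_add', IsUnit.neg_iff, add_comm] at h
  exact h

theorem norm_lt_one_of_mem_spectrum_cayley {s : A} {u : Aˣ} (hu : (u : A) = s + 1)
    (hs : ∀ z ∈ spectrum ℂ s, 0 < z.re) {μ : ℂ} (hμ : μ ∈ spectrum ℂ ((s - 1) * ↑u⁻¹)) :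
    ‖μ‖ < 1 := by
  have hfac : algebraMap ℂ A μ - (s - 1) * ↑u⁻¹ = ((μ - 1) • s + (μ + 1) • 1) * ↑u⁻¹ := by
    have : algebraMap ℂ A μ = (μ • (s + 1)) * ↑u⁻¹ := by
      rw [← hu, smul_mul_assoc, u.mul_inv, Algebra.algebraMap_eq_smul_one]
    rw [this, ← sub_mul, smul_add, sub_smul, add_smul, one_smul, one_smul]
    congr 1
    abel
  rw [spectrum.mem_iff, hfac, Units.isUnit_mul_units] at hμ
  have hμ1 : μ ≠ 1 := by
    rintro rfl
    apply hμ
    rw [sub_self, zero_smul, zero_add, ← Algebra.algebraMap_eq_smul_one]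
    exact (isUnit_iff_ne_zero.mpr (by norm_num)).map (algebraMap ℂ A)
  set l : ℂ := (μ + 1) / (1 - μ) with hl
  have hsub : (1 : ℂ) - μ ≠ 0 := sub_ne_zero.mpr (Ne.symm hμ1)
  have hl_mem : l ∈ spectrum ℂ s := by
    rw [spectrum.mem_iff]
    intro hunit
    apply hμ
    have : (μ - 1) • s + (μ + 1) • (1 : A) = algebraMap ℂ A (1 - μ) * (algebraMap ℂ A l - s) := by
      rw [mul_sub, ← map_mul, hl, mul_div_cancel₀ _ hsub, Algebra.algebraMap_eq_smul_one,
        Algebra.algebraMap_eq_smul_one, smul_mul_assoc, one_mul]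
      simp only [sub_smul, one_smul]
      abel
    rw [this]
    exact ((isUnit_iff_ne_zero.mpr hsub).map (algebraMap ℂ A)).mul hunit
  have hμl : μ * (l + 1) = l - 1 := by
    rw [hl]
    field_simp
    ring
  have hpos : 0 < ‖l + 1‖ := norm_pos_iff.mpr fun h => by
    have := congrArg Complex.re h
    simp only [Complex.add_re, Complex.one_re, Complex.zero_re] at this
    linarith [hs l hl_mem]
  refine lt_of_mul_lt_mul_right ?_ hpos.le
  rw [one_mul, ← norm_mul, hμl]
  exact Complex.norm_sub_one_lt_norm_add_one (hs l hl_mem)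

theorem eq_zero_of_mul_self_eq_zero_of_norm_one_add_le_one {c : A} (hc : c * c = 0)
    (h : ‖1 + c‖ ≤ 1) : c = 0 := by
  have hpow : ∀ n : ℕ, (1 + c) ^ n = 1 + (n : ℂ) • c := by
    intro n
    induction n with
    | zero => simp
    | succ n ih =>
      rw [pow_succ, ih]
      simp only [add_mul, mul_add, one_mul, mul_one, smul_mul_assoc, hc, smul_zero, add_zero]
      push_cast
      rw [add_smul, one_smul, add_assoc]
  have hbound : ∀ n : ℕ, 0 < n → n * ‖c‖ ≤ 1 + ‖(1 : A)‖ := by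
    intro n hn
    calc (n : ℝ) * ‖c‖ = ‖(1 + c) ^ n - 1‖ := by
          rw [hpow, add_sub_cancel_left, norm_smul, Complex.norm_natCast]
      _ ≤ ‖(1 + c) ^ n‖ + ‖(1 : A)‖ := norm_sub_le _ _
      _ ≤ ‖1 + c‖ ^ n + ‖(1 : A)‖ := by gcongr; exact norm_pow_le' _ hn
      _ ≤ 1 + ‖(1 : A)‖ := by gcongr; exact pow_le_one₀ (norm_nonneg _) h
  by_contra hne
  obtain ⟨n, hn⟩ := exists_nat_gt ((1 + ‖(1 : A)‖) / ‖c‖)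
  have hn0 : 0 < n := by
    have : (0 : ℝ) < n := lt_of_le_of_lt (by positivity) hn
    exact_mod_cast this
  have := hbound n hn0
  rw [div_lt_iff₀ (norm_pos_iff.mpr hne)] at hn
  linarith

variable [CompleteSpace A]

theorem tendsto_pow_atTop_nhds_zero_of_forall_norm_lt_one {a : A}
    (h : ∀ z ∈ spectrum ℂ a, ‖z‖ < 1) : Tendsto (fun n : ℕ => a ^ n) atTop (𝓝 0) := by
  nontriviality A
  have hρ : spectralRadius ℂ a < 1 := by
    simpa using spectrum.spectralRadius_lt_of_forall_lt a (r := 1) fun z hz => by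
      simpa [← NNReal.coe_lt_coe] using h z hz
  obtain ⟨r, hr0, hρr, hr1⟩ := ENNReal.lt_iff_exists_real_btwn.mp hρ
  have hroot : ∀ᶠ n : ℕ in atTop, ‖a ^ n‖ ^ (1 / n : ℝ) < r := by
    have hgelfand := spectrum.pow_norm_pow_one_div_tendsto_nhds_spectralRadius a
    filter_upwards [hgelfand.eventually_lt_const hρr] with n hn
    exact (ENNReal.ofReal_lt_ofReal_iff'.mp hn).1
  refine squeeze_zero_norm' ?_ (tendsto_pow_atTop_nhds_zero_of_lt_one hr0
    (ENNReal.ofReal_lt_one.mp hr1))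
  filter_upwards [hroot, eventually_ne_atTop 0] with n hn hn0
  calc ‖a ^ n‖ = (‖a ^ n‖ ^ (n⁻¹ : ℝ)) ^ n := (Real.rpow_inv_natCast_pow (norm_nonneg _) hn0).symm
    _ ≤ r ^ n := by rw [← one_div]; gcongr

theorem eq_zero_of_mul_add_mul_eq_zero {s t x : A} (hs : ∀ z ∈ spectrum ℂ s, 0 < z.re)
    (ht : ∀ z ∈ spectrum ℂ t, 0 < z.re) (h : s * x + x * t = 0) : x = 0 := by
  obtain ⟨u, hu⟩ := isUnit_add_one_of_forall_re_pos hs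
  obtain ⟨v, hv⟩ := isUnit_add_one_of_forall_re_pos ht
  set c := (s - 1) * ↑u⁻¹
  set d := (t - 1) * ↑v⁻¹
  have hx_right : x * (t - 1) = -(↑u * x) :=
    calc x * (t - 1) = (s * x + x * t) - (s + 1) * x := by noncomm_ring
      _ = -(↑u * x) := by rw [h, hu, zero_sub]
  have hx_left : (s - 1) * x = -(x * ↑v) :=
    calc (s - 1) * x = (s * x + x * t) - x * (t + 1) := by noncomm_ring
      _ = -(x * ↑v) := by rw [h, hv, zero_sub]
  have hfix : c * x * d = x :=
    calc c * x * d = (s - 1) * (↑u⁻¹ * (x * (t - 1))) * ↑v⁻¹ := by simp only [c, d, mul_assoc]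
      _ = x := by
        rw [hx_right, mul_neg, u.inv_mul_cancel_left, mul_neg, hx_left, neg_neg,
          v.mul_inv_cancel_right]
  have hpow : ∀ n : ℕ, c ^ n * x * d ^ n = x := by
    intro n
    induction n with
    | zero => simp
    | succ n ih =>
      calc c ^ (n + 1) * x * d ^ (n + 1) = c ^ n * (c * x * d) * d ^ n := by
            rw [pow_succ c, pow_succ' d]
            simp only [mul_assoc]
        _ = x := by rw [hfix, ih]
  have hlim : Tendsto (fun n : ℕ => c ^ n * x * d ^ n) atTop (𝓝 0) := by
    simpa using ((tendsto_pow_atTop_nhds_zero_of_forall_norm_lt_one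
      fun _ => norm_lt_one_of_mem_spectrum_cayley hu hs).mul_const x).mul
      (tendsto_pow_atTop_nhds_zero_of_forall_norm_lt_one
        fun _ => norm_lt_one_of_mem_spectrum_cayley hv ht)
  simp only [hpow] at hlim
  exact tendsto_nhds_unique tendsto_const_nhds hlim

theorem IsIdempotentElem.exp_smul {p : A} (hp : IsIdempotentElem p) (z : ℂ) :
    NormedSpace.exp (z • p) = 1 + (Complex.exp z - 1) • p := by
  have hterm : ∀ n : ℕ, ((n ! : ℂ)⁻¹) • (z • p) ^ n =
      ((n ! : ℂ)⁻¹ • z ^ n) • p + if n = 0 then 1 - p else 0 := by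
    rintro (_ | n)
    · simp
    · rw [smul_pow, hp.pow_succ_eq, smul_smul, if_neg n.succ_ne_zero, add_zero, smul_eq_mul]
  have hsum : HasSum (fun n : ℕ => ((n ! : ℂ)⁻¹) • (z • p) ^ n) (Complex.exp z • p + (1 - p)) := by
    simp_rw [hterm]
    refine .add ?_ (hasSum_ite_eq 0 (1 - p))
    rw [Complex.exp_eq_exp_ℂ]
    exact (NormedSpace.exp_series_hasSum_exp' z).smul_const p
  rw [(NormedSpace.exp_series_hasSum_exp' (𝕂 := ℂ) (z • p)).unique hsum, sub_smul, one_smul]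
  abel

theorem IsIdempotentElem.exp_I_mul_pi_smul {p : A} (hp : IsIdempotentElem p) :
    NormedSpace.exp ((Complex.I * (Real.pi : ℂ)) • p) = 1 - 2 * p := by
  rw [hp.exp_smul, mul_comm, Complex.exp_pi_mul_I]
  rw [show (-1 - 1 : ℂ) = -2 by norm_num, neg_smul, two_smul, two_mul, sub_eq_add_neg]

theorem IsPositiveEl.eq_of_sq_eq {s t : A} (hs : IsPositiveEl s) (hsu : IsUnit s)
    (ht : IsPositiveEl t) (htu : IsUnit t) (h : s ^ 2 = t ^ 2) : s = t := by
  refine sub_eq_zero.mp (eq_zero_of_mul_add_mul_eq_zero (fun _ => hs.re_pos_of_mem_spectrum hsu)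
    (fun _ => ht.re_pos_of_mem_spectrum htu) ?_)
  calc s * (s - t) + (s - t) * t = s ^ 2 - t ^ 2 := by noncomm_ring
    _ = 0 := sub_eq_zero.mpr h

theorem IsHermitianWt.eq_zero_of_reflection_mul_eq {w p q c : A} (hp : IsHermitianWt w p)
    (hq : IsHermitianWt w q) (hpp : IsIdempotentElem p) (hqq : IsIdempotentElem q)
    (h : (1 - 2 * p) * (1 - 2 * q) = 1 + c) (hc : c * c = 0) : c = 0 := by
  obtain ⟨s, hs, hsw, hsp⟩ := hp
  obtain ⟨s', hs', hs'w, hs'q⟩ := hq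
  obtain rfl : s = s' :=
    Units.ext (hs.eq_of_sq_eq s.isUnit hs' s'.isUnit (hsw.trans hs'w.symm))
  have hconj : ∀ x y : A, (s * x * ↑s⁻¹) * (s * y * ↑s⁻¹) = s * (x * y) * ↑s⁻¹ := by
    simp [mul_assoc]
  have hp1 : ‖(s : A) * (1 - 2 * p) * ↑s⁻¹‖ = 1 := hpp.exp_I_mul_pi_smul ▸ hsp Real.pi
  have hq1 : ‖(s : A) * (1 - 2 * q) * ↑s⁻¹‖ = 1 := hqq.exp_I_mul_pi_smul ▸ hs'q Real.pi
  have hconj_c : (s : A) * c * ↑s⁻¹ = 0 := by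
    refine eq_zero_of_mul_self_eq_zero_of_norm_one_add_le_one (by rw [hconj, hc]; simp) ?_
    calc ‖1 + (s : A) * c * ↑s⁻¹‖ = ‖(s * (1 - 2 * p) * ↑s⁻¹) * (s * (1 - 2 * q) * ↑s⁻¹)‖ := by
          rw [hconj, h, mul_add, add_mul, mul_one, Units.mul_inv]
      _ ≤ 1 := (norm_mul_le _ _).trans (by rw [hp1, hq1, one_mul])
  simpa using congr(↑s⁻¹ * $hconj_c * s)

theorem IsHermitianWt.eq_of_mul_eq_right {w p q : A} (hp : IsHermitianWt w p)
    (hq : IsHermitianWt w q) (hpp : IsIdempotentElem p) (hqq : IsIdempotentElem q)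
    (hpq : p * q = q) (hqp : q * p = p) : p = q := by
  have hc := hp.eq_zero_of_reflection_mul_eq hq hpp hqq (c := (2 : ℂ) • (q - p))
    (by rw [two_smul]; noncomm_ring; rw [hpq]; abel)
    (by rw [smul_mul_smul_comm]; noncomm_ring; rw [hpp.eq, hqq.eq, hpq, hqp]; simp)
  exact (sub_eq_zero.mp ((smul_eq_zero.mp hc).resolve_left two_ne_zero)).symm

theorem IsHermitianWt.eq_of_mul_eq_left {w p q : A} (hp : IsHermitianWt w p)
    (hq : IsHermitianWt w q) (hpp : IsIdempotentElem p) (hqq : IsIdempotentElem q)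
    (hpq : p * q = p) (hqp : q * p = q) : p = q := by
  have hc := hq.eq_zero_of_reflection_mul_eq hp hqq hpp (c := (2 : ℂ) • (q - p))
    (by rw [two_smul]; noncomm_ring; rw [hqp]; abel)
    (by rw [smul_mul_smul_comm]; noncomm_ring; rw [hpp.eq, hqq.eq, hpq, hqp]; simp)
  exact (sub_eq_zero.mp ((smul_eq_zero.mp hc).resolve_left two_ne_zero)).symm

theorem IsWMPI.unique {e f a b c : A} (hb : IsWMPI e f a b) (hc : IsWMPI e f a c) : b = c := by
  obtain ⟨hab, hbab, hbe, hbf⟩ := hb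
  obtain ⟨hac, hcac, hce, hcf⟩ := hc
  have hleft : a * b = a * c :=
    hbe.eq_of_mul_eq_right hce (by rw [IsIdempotentElem, ← mul_assoc, hab])
      (by rw [IsIdempotentElem, ← mul_assoc, hac]) (by rw [← mul_assoc, hab])
      (by rw [← mul_assoc, hac])
  have hright : b * a = c * a :=
    hbf.eq_of_mul_eq_left hcf (by rw [IsIdempotentElem, mul_assoc, ← mul_assoc a, hab])
      (by rw [IsIdempotentElem, mul_assoc, ← mul_assoc a, hac])
      (by rw [mul_assoc, ← mul_assoc a, hac]) (by rw [mul_assoc, ← mul_assoc a, hab])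
  calc b = b * a * b := hbab.symm
    _ = c * (a * c) := by rw [hright, mul_assoc, hleft]
    _ = c := by rw [← mul_assoc, hcac]

theorem isWEP_iff_commute {e f a b : A} (hb : IsWMPI e f a b) : IsWEP e f a ↔ Commute a b :=
  ⟨fun ⟨_, hc, hac⟩ => hc.unique hb ▸ hac, fun h => ⟨b, hb, h⟩⟩

end

theorem commute_of_inner_inverse_of_factor {M : Type*} [Semigroup M] {a b v w : M}
    (h : a * b * a = a) (hv : b * a = a * v) (hw : a * b = w * a) : Commute a b :=
  calc a * b = w * (a * b * a) := by rw [h, hw]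
    _ = a * b * (b * a) := by rw [← mul_assoc, ← mul_assoc, ← hw, mul_assoc (a * b)]
    _ = a * b * (a * v) := by rw [hv]
    _ = b * a := by rw [← mul_assoc, h, ← hv]

theorem weighted_EP_iff_factorization_uv_general
    {A : Type*} [NormedRing A] [NormedAlgebra ℂ A] [CompleteSpace A]
    (e f a : A)
    (ad : A) (had : IsWMPI e f a ad) :
    (IsWEP e f a ↔
      ∃ u v u₁ v₁ : A, ad * a = u * ad ∧ ad * a = a * v ∧
        a * ad = ad * u₁ ∧ a * ad = v₁ * a) ∧
    (IsWEP e f a ↔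
      ∃ u₂ v₂ u₃ v₃ : A, ad * a = u₂ * ad ∧ a * ad = ad * u₃ ∧
        ad = a * v₂ ∧ ad = v₃ * a) := by
  rw [isWEP_iff_commute had]
  obtain ⟨hinner, houter, -, -⟩ := had
  refine ⟨⟨fun h => ⟨a, ad, a, ad, h.eq.symm, h.eq.symm, h.eq, h.eq⟩, ?_⟩, ⟨fun h => ?_, ?_⟩⟩
  · rintro ⟨-, v, -, v₁, -, hv, -, hv₁⟩
    exact commute_of_inner_inverse_of_factor hinner hv hv₁
  · refine ⟨a, ad * ad, a, ad * ad, h.eq.symm, h.eq, ?_, ?_⟩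
    · rw [← mul_assoc, h.eq, houter]
    · rw [mul_assoc, ← h.eq, ← mul_assoc, houter]
  · rintro ⟨-, v₂, -, v₃, -, -, hv₂, hv₃⟩
    exact commute_of_inner_inverse_of_factor hinner (v := v₂ * a) (w := a * v₃)
      (by rw [← mul_assoc, ← hv₂]) (by rw [mul_assoc, ← hv₃])

/-- `a` is weighted EP with weights `e` and `f` iff there exist
`u, v, u₁, v₁ ∈ A` with `a^†_{e,f} a = u a^†_{e,f} = a v` and
`a a^†_{e,f} = a^†_{e,f} u₁ = v₁ a`, iff there exist `u₂, v₂, u₃, v₃ ∈ A`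
with `a^†_{e,f} a = u₂ a^†_{e,f}`, `a a^†_{e,f} = a^†_{e,f} u₃` and
`a^†_{e,f} = a v₂ = v₃ a`. -/
theorem weighted_EP_iff_factorization_uv
    {A : Type*} [NormedRing A] [NormedAlgebra ℂ A] [CompleteSpace A]
    (e f a : A)
    (he : IsPositiveEl e ∧ IsUnit e) (hf : IsPositiveEl f ∧ IsUnit f)
    (ad : A) (had : IsWMPI e f a ad) :
    (IsWEP e f a ↔
      ∃ u v u₁ v₁ : A, ad * a = u * ad ∧ ad * a = a * v ∧
        a * ad = ad * u₁ ∧ a * ad = v₁ * a) ∧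
    (IsWEP e f a ↔
      ∃ u₂ v₂ u₃ v₃ : A, ad * a = u₂ * ad ∧ a * ad = ad * u₃ ∧
        ad = a * v₂ ∧ ad = v₃ * a) :=
  weighted_EP_iff_factorization_uv_general e f a ad had
end
end

section
/- Let X be a complex Banach space, let E, F ∈ L(X) be invertible positive operators, and let T ∈ L(X). Then T is weighted EP with weights E and F if and only if there exist complex Banach spaces X₁ and X₂, a bounded linear isomorphism T₁ ∈ L(X₁), and a bounded linear isomorphism J : X₁ ⊕₁ X₂ → X such that T = J (T₁ ⊕ 0) J^{-1}, T^†_{E,F} = J (T₁^{-1} ⊕ 0) J^{-1}, J (I_{X₁} ⊕ 0) J^{-1} ∈ H(L(X)^E) and J (0 ⊕ I_{X₂}) J^{-1} ∈ H(L(X)^F). -/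
/-!
Common definitions: hermitian and positive elements of a complex unital Banach
algebra, hermitian elements with respect to the equivalent norm induced by an
invertible positive element (weight), and the weighted Moore–Penrose inverse,
both for Banach algebra elements and for bounded linear operators between
Banach spaces.
-/

noncomputable section

universe u

/-- The direct sum operator `A₁ ⊕ A₂` on `X₁ ⊕₁ X₂` (the product with the
1-norm `‖x₁ ⊕ x₂‖ = ‖x₁‖ + ‖x₂‖`). -/
def dsumOp {X₁ X₂ : Type*} [NormedAddCommGroup X₁] [NormedSpace ℂ X₁]
    [NormedAddCommGroup X₂] [NormedSpace ℂ X₂]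
    (A₁ : X₁ →L[ℂ] X₁) (A₂ : X₂ →L[ℂ] X₂) :
    WithLp 1 (X₁ × X₂) →L[ℂ] WithLp 1 (X₁ × X₂) :=
  ((WithLp.prodContinuousLinearEquiv 1 ℂ X₁ X₂).symm.toContinuousLinearMap).comp
    ((A₁.prodMap A₂).comp
      (WithLp.prodContinuousLinearEquiv 1 ℂ X₁ X₂).toContinuousLinearMap)

/-- A bundled complex Banach space (used to quantify existentially over Banach
spaces). -/
structure BanachC : Type (u + 1) where
  carrier : Type u
  [grp : NormedAddCommGroup carrier]
  [mod : NormedSpace ℂ carrier]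
  [cpl : CompleteSpace carrier]

attribute [instance] BanachC.grp BanachC.mod BanachC.cpl

/-!
If `S = T^†_{E,F}` commutes with `T`, then `P = TS = ST` is a bounded idempotent, so `X` is the
topological direct sum of `range P` and `ker P`. Both `T` and `S` vanish on `ker P` and are mutually
inverse on `range P`; in this splitting `P = I ⊕ 0`, and `I - P = 0 ⊕ I` lies in `H(L(X)^F)`
because `ST` does. Conversely, `T₁ ⊕ 0` and `T₁⁻¹ ⊕ 0` commute.
-/

theorem NormedSpace.exp_I_smul_one_sub {A : Type*} [NormedRing A] [NormedAlgebra ℂ A]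
    [CompleteSpace A] (a : A) (t : ℝ) :
    NormedSpace.exp ((Complex.I * t) • (1 - a)) =
      Complex.exp (Complex.I * t) • NormedSpace.exp ((Complex.I * ((-t : ℝ) : ℂ)) • a) := by
  have hsplit : (Complex.I * t) • (1 - a) =
      algebraMap ℂ A (Complex.I * t) + (Complex.I * ((-t : ℝ) : ℂ)) • a := by
    rw [Algebra.algebraMap_eq_smul_one]
    push_cast
    module
  rw [hsplit, NormedSpace.exp_add_of_commute_of_mem_ball (𝕂 := ℂ)
      (Algebra.commute_algebraMap_left _ _)
      ((NormedSpace.expSeries_radius_eq_top ℂ A).symm ▸ edist_lt_top _ _)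
      ((NormedSpace.expSeries_radius_eq_top ℂ A).symm ▸ edist_lt_top _ _),
    ← NormedSpace.algebraMap_exp_comm, Algebra.algebraMap_eq_smul_one, smul_mul_assoc, one_mul,
    Complex.exp_eq_exp_ℂ]

theorem IsHermitianWt.one_sub {A : Type*} [NormedRing A] [NormedAlgebra ℂ A] [CompleteSpace A]
    {u a : A} (h : IsHermitianWt u a) : IsHermitianWt u (1 - a) := by
  obtain ⟨s, hs, hsq, hnorm⟩ := h
  refine ⟨s, hs, hsq, fun t => ?_⟩
  rw [NormedSpace.exp_I_smul_one_sub, mul_smul_comm, smul_mul_assoc, norm_smul,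
    Complex.norm_exp_I_mul_ofReal, one_mul, hnorm]

section dsumOp

variable {X₁ X₂ : Type*} [NormedAddCommGroup X₁] [NormedSpace ℂ X₁]
  [NormedAddCommGroup X₂] [NormedSpace ℂ X₂]

theorem dsumOp_mul (A₁ B₁ : X₁ →L[ℂ] X₁) (A₂ B₂ : X₂ →L[ℂ] X₂) :
    dsumOp (A₁ * B₁) (A₂ * B₂) = dsumOp A₁ A₂ * dsumOp B₁ B₂ :=
  rfl

theorem commute_dsumOp_symm_zero (T₁ : X₁ ≃L[ℂ] X₁) :
    Commute (dsumOp (T₁ : X₁ →L[ℂ] X₁) (0 : X₂ →L[ℂ] X₂))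
      (dsumOp (T₁.symm : X₁ →L[ℂ] X₁) 0) := by
  rw [Commute, SemiconjBy, ← dsumOp_mul, ← dsumOp_mul, mul_zero]
  exact congrArg (dsumOp · 0) (T₁.coe_comp_coe_symm.trans T₁.coe_symm_comp_coe.symm)

end dsumOp

namespace Submodule.IsTopCompl

variable {X : Type*} [NormedAddCommGroup X] [NormedSpace ℂ X] {p q : Submodule ℂ X}

def lpProdEquiv (h : IsTopCompl p q) : WithLp 1 (p × q) ≃L[ℂ] X :=
  (WithLp.prodContinuousLinearEquiv 1 ℂ p q).trans (prodEquivOfIsTopCompl p q h)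

theorem conj_lpProdEquiv_dsumOp (h : IsTopCompl p q) {A₁ : p →L[ℂ] p} {A₂ : q →L[ℂ] q}
    {C : X →L[ℂ] X} (h₁ : ∀ u : p, (A₁ u : X) = C u) (h₂ : ∀ v : q, (A₂ v : X) = C v) :
    h.lpProdEquiv.conjContinuousAlgEquiv (dsumOp A₁ A₂) = C := by
  ext x
  simp [lpProdEquiv, dsumOp, prodEquivOfIsTopCompl_symm_apply, h₁, h₂, ← map_add,
    projection_add_projection_eq_self]

end Submodule.IsTopCompl

section GroupInverse

open ContinuousLinearMap

variable {X : Type u} [NormedAddCommGroup X] [NormedSpace ℂ X] [CompleteSpace X]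

theorem exists_conj_dsumOp_of_commute {T S : X →L[ℂ] X} (hTST : T * S * T = T)
    (hSTS : S * T * S = S) (hTS : Commute T S) :
    ∃ (V₁ V₂ : BanachC.{u}) (T₁ : V₁.carrier ≃L[ℂ] V₁.carrier)
      (J : WithLp 1 (V₁.carrier × V₂.carrier) ≃L[ℂ] X),
      J.conjContinuousAlgEquiv (dsumOp T₁ 0) = T ∧
      J.conjContinuousAlgEquiv (dsumOp (T₁.symm : V₁.carrier →L[ℂ] V₁.carrier) 0) = S ∧
      J.conjContinuousAlgEquiv (dsumOp 1 0) = T * S ∧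
      J.conjContinuousAlgEquiv (dsumOp 0 1) = 1 - S * T := by
  have hTP : T * (T * S) = T := by rw [hTS.eq, ← mul_assoc, hTST]
  have hPS : T * S * S = S := by rw [hTS.eq, hSTS]
  have hSP : S * (T * S) = S := by rw [← mul_assoc, hSTS]
  have hP : IsIdempotentElem (T * S) := by rw [IsIdempotentElem, ← mul_assoc, hTST]
  rw [← hTS.eq]
  generalize hP_def : T * S = P at *
  have hP_range {A : X →L[ℂ] X} (hA : P * A = A) (x : X) : A x ∈ P.range :=
    ⟨A x, DFunLike.congr_fun hA x⟩
  have hP_ker {A : X →L[ℂ] X} (hA : A * P = A) (v : P.ker) : A v = 0 := by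
    rw [← hA]
    exact (congrArg A (LinearMap.mem_ker.1 v.2)).trans A.map_zero
  have hP_fix (u : P.range) : P u = u :=
    (LinearMap.IsIdempotentElem.mem_range_iff hP.toLinearMap).1 u.2
  have : CompleteSpace P.range := hP.isClosed_range.completeSpace_coe
  have : CompleteSpace P.ker := P.isClosed_ker.completeSpace_coe
  let T₁ : P.range ≃L[ℂ] P.range := .equivOfInverse
    (T.restrict fun x _ => hP_range hTST x) (S.restrict fun x _ => hP_range hPS x)
    (fun u => Subtype.ext <|
      (DFunLike.congr_fun (hTS.eq.symm.trans hP_def) (u : X)).trans (hP_fix u))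
    (fun u => Subtype.ext <| (DFunLike.congr_fun hP_def (u : X)).trans (hP_fix u))
  have h := hP.isTopCompl
  refine ⟨⟨P.range⟩, ⟨P.ker⟩, T₁, h.lpProdEquiv, ?_, ?_, ?_, ?_⟩
  · exact h.conj_lpProdEquiv_dsumOp (fun _ => rfl) fun v => (hP_ker hTP v).symm
  · exact h.conj_lpProdEquiv_dsumOp (fun _ => rfl) fun v => (hP_ker hSP v).symm
  · exact h.conj_lpProdEquiv_dsumOp (fun u => (hP_fix u).symm) fun v => v.2.symm
  · refine h.conj_lpProdEquiv_dsumOp (fun u => ?_) fun v => ?_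
    · simp [hP_fix]
    · simp

end GroupInverse

theorem weighted_EP_iff_similarity_to_direct_sum_general
    {X : Type u} [NormedAddCommGroup X] [NormedSpace ℂ X] [CompleteSpace X]
    (E F T : X →L[ℂ] X) :
    IsWEPop E F T ↔
      ∃ (V₁ V₂ : BanachC.{u}) (T₁ : V₁.carrier ≃L[ℂ] V₁.carrier)
        (J : WithLp 1 (V₁.carrier × V₂.carrier) ≃L[ℂ] X),
        T = J.toContinuousLinearMap.comp
          ((dsumOp (T₁ : V₁.carrier →L[ℂ] V₁.carrier) 0).comp
            J.symm.toContinuousLinearMap) ∧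
        IsWMPIop E F T (J.toContinuousLinearMap.comp
          ((dsumOp ((T₁.symm : V₁.carrier ≃L[ℂ] V₁.carrier) :
              V₁.carrier →L[ℂ] V₁.carrier) 0).comp
            J.symm.toContinuousLinearMap)) ∧
        IsHermitianWt E (J.toContinuousLinearMap.comp
          ((dsumOp (1 : V₁.carrier →L[ℂ] V₁.carrier) 0).comp
            J.symm.toContinuousLinearMap)) ∧
        IsHermitianWt F (J.toContinuousLinearMap.comp
          ((dsumOp (0 : V₁.carrier →L[ℂ] V₁.carrier) 1).comp
            J.symm.toContinuousLinearMap)) := by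
  constructor
  · rintro ⟨S, hS, hTS⟩
    obtain ⟨V₁, V₂, T₁, J, hT, hS', hP, hQ⟩ := exists_conj_dsumOp_of_commute hS.1 hS.2.1 hTS
    refine ⟨V₁, V₂, T₁, J, hT.symm, ?_⟩
    simp only [← ContinuousLinearEquiv.conjContinuousAlgEquiv_apply, hS', hP, hQ]
    exact ⟨hS, hS.2.2.1, hS.2.2.2.one_sub⟩
  · rintro ⟨V₁, V₂, T₁, J, rfl, hS, -, -⟩
    exact ⟨_, hS, ((commute_dsumOp_symm_zero T₁).map J.conjContinuousAlgEquiv).eq⟩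

/-- Theorem 4.2: `T ∈ L(X)` is weighted EP with weights `E` and `F` iff there
exist Banach spaces `X₁, X₂`, an isomorphism `T₁ ∈ L(X₁)` and a bounded linear
isomorphism `J : X₁ ⊕₁ X₂ → X` with `T = J (T₁ ⊕ 0) J⁻¹`,
`T^†_{E,F} = J (T₁⁻¹ ⊕ 0) J⁻¹`, `J (I ⊕ 0) J⁻¹ ∈ H(L(X)^E)` and
`J (0 ⊕ I) J⁻¹ ∈ H(L(X)^F)`. -/
theorem weighted_EP_iff_similarity_to_direct_sum
    {X : Type u} [NormedAddCommGroup X] [NormedSpace ℂ X] [CompleteSpace X]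
    (E F T : X →L[ℂ] X)
    (hE : IsPositiveEl E ∧ IsUnit E) (hF : IsPositiveEl F ∧ IsUnit F) :
    IsWEPop E F T ↔
      ∃ (V₁ V₂ : BanachC.{u}) (T₁ : V₁.carrier ≃L[ℂ] V₁.carrier)
        (J : WithLp 1 (V₁.carrier × V₂.carrier) ≃L[ℂ] X),
        T = J.toContinuousLinearMap.comp
          ((dsumOp (T₁ : V₁.carrier →L[ℂ] V₁.carrier) 0).comp
            J.symm.toContinuousLinearMap) ∧
        IsWMPIop E F T (J.toContinuousLinearMap.comp
          ((dsumOp ((T₁.symm : V₁.carrier ≃L[ℂ] V₁.carrier) :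
              V₁.carrier →L[ℂ] V₁.carrier) 0).comp
            J.symm.toContinuousLinearMap)) ∧
        IsHermitianWt E (J.toContinuousLinearMap.comp
          ((dsumOp (1 : V₁.carrier →L[ℂ] V₁.carrier) 0).comp
            J.symm.toContinuousLinearMap)) ∧
        IsHermitianWt F (J.toContinuousLinearMap.comp
          ((dsumOp (0 : V₁.carrier →L[ℂ] V₁.carrier) 1).comp
            J.symm.toContinuousLinearMap)) :=
  weighted_EP_iff_similarity_to_direct_sum_general E F T
end
end
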